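/- Let v ∈ L^p(0,T) be absolutely continuous, p ≥ 1, and τ ∈ (0,T]. Then (∫₀^τ |v(t)|^p dt)^{1/p} ≤ (∫₀^τ |v(t)| dt)^{1/p} · (|v(0)| + ∫₀^τ |v'(t)| dt)^{1/p'}, where 1/p + 1/p' = 1. -/
import Mathlib


open MeasureTheory intervalIntegral

/-- Gagliardo–Nirenberg-type inequality in time:
`(∫₀^τ |v|^p)^{1/p} ≤ (∫₀^τ |v|)^{1/p} (|v(0)| + ∫₀^τ |v'|)^{1/p'}`,
`1/p + 1/p' = 1`. -/
theorem time_GN_inequality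
    (T τ p p' : ℝ) (hT : 0 < T) (hτ : τ ∈ Set.Ioc (0:ℝ) T)
    (hp : 1 ≤ p) (hpp' : 1/p + 1/p' = 1)
    (v v' : ℝ → ℝ)
    (hderiv : ∀ t ∈ Set.Icc (0:ℝ) T, HasDerivAt v (v' t) t)
    (hv'int : IntervalIntegrable v' volume 0 T)
    (hvp : IntervalIntegrable (fun t => |v t| ^ p) volume 0 T) :
    (∫ t in (0:ℝ)..τ, |v t| ^ p) ^ (1/p) ≤
      (∫ t in (0:ℝ)..τ, |v t|) ^ (1/p) *
      (|v 0| + ∫ t in (0:ℝ)..τ, |v' t|) ^ (1/p') := by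
  obtain ⟨hτ0, hτT⟩ := hτ
  have hp0 : (0:ℝ) < p := lt_of_lt_of_le one_pos hp
  set M : ℝ := |v 0| + ∫ t in (0:ℝ)..τ, |v' t| with hMdef
  -- subsets of intervals
  have hsub : ∀ t ∈ Set.Icc (0:ℝ) τ, Set.uIcc (0:ℝ) t ⊆ Set.uIcc (0:ℝ) T := by
    intro t ht
    rw [Set.uIcc_of_le ht.1, Set.uIcc_of_le hT.le]
    exact Set.Icc_subset_Icc le_rfl (ht.2.trans hτT)
  have hτmem : τ ∈ Set.Icc (0:ℝ) τ := ⟨hτ0.le, le_rfl⟩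
  have hv'τ : IntervalIntegrable v' volume 0 τ := hv'int.mono_set (hsub τ hτmem)
  -- integral of |v'| over [0,t] is ≤ over [0,τ]
  have habs_nonneg : (0:ℝ) ≤ ∫ t in (0:ℝ)..τ, |v' t| := by
    apply intervalIntegral.integral_nonneg hτ0.le
    intro t _; exact abs_nonneg _
  have hM0 : 0 ≤ M := add_nonneg (abs_nonneg _) habs_nonneg
  -- pointwise bound |v t| ≤ M on [0, τ]
  have hbound : ∀ t ∈ Set.Icc (0:ℝ) τ, |v t| ≤ M := by
    intro t ht
    have hv't : IntervalIntegrable v' volume 0 t := hv'int.mono_set (hsub t ht)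
    have hftc : ∫ s in (0:ℝ)..t, v' s = v t - v 0 := by
      apply intervalIntegral.integral_eq_sub_of_hasDerivAt
      · intro s hs
        apply hderiv
        have := hsub t ht hs
        rwa [Set.uIcc_of_le hT.le] at this
      · exact hv't
    have h1 : |v t - v 0| ≤ ∫ s in (0:ℝ)..t, |v' s| := by
      rw [← hftc]
      exact intervalIntegral.abs_integral_le_integral_abs ht.1
    have h2 : (∫ s in (0:ℝ)..t, |v' s|) ≤ ∫ s in (0:ℝ)..τ, |v' s| := by
      have hv'τ' : IntervalIntegrable (fun s => |v' s|) volume t τ := by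
        apply IntervalIntegrable.abs
        apply hv'int.mono_set
        rw [Set.uIcc_of_le ht.2, Set.uIcc_of_le hT.le]
        exact Set.Icc_subset_Icc ht.1 hτT
      have hv't' : IntervalIntegrable (fun s => |v' s|) volume 0 t :=
        hv't.abs
      have := intervalIntegral.integral_add_adjacent_intervals hv't' hv'τ'
      rw [← this]
      have : (0:ℝ) ≤ ∫ s in t..τ, |v' s| :=
        intervalIntegral.integral_nonneg ht.2 (fun s _ => abs_nonneg _)
      linarith
    calc |v t| = |v 0 + (v t - v 0)| := by ring_nf
      _ ≤ |v 0| + |v t - v 0| := abs_add_le _ _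
      _ ≤ |v 0| + ∫ s in (0:ℝ)..τ, |v' s| := by
          have := h1.trans h2; linarith
  -- pointwise: |v t|^p ≤ |v t| * M^(p-1)
  have hpw : ∀ t ∈ Set.Icc (0:ℝ) τ, |v t| ^ p ≤ |v t| * M ^ (p - 1) := by
    intro t ht
    have h := hbound t ht
    have h0 : (0:ℝ) ≤ |v t| := abs_nonneg _
    have : |v t| ^ p = |v t| ^ (1 + (p - 1)) := by ring_nf
    rw [this, Real.rpow_add' h0 (by linarith), Real.rpow_one]
    exact mul_le_mul_of_nonneg_left
      (Real.rpow_le_rpow h0 h (by linarith)) h0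
  -- integrability on [0, τ]
  have hvc : ContinuousOn v (Set.Icc (0:ℝ) T) := fun t ht =>
    (hderiv t ht).continuousAt.continuousWithinAt
  have hIv : IntervalIntegrable (fun t => |v t|) volume 0 τ := by
    apply ContinuousOn.intervalIntegrable
    rw [Set.uIcc_of_le hτ0.le]
    exact (hvc.mono (Set.Icc_subset_Icc le_rfl hτT)).abs
  have hIvp : IntervalIntegrable (fun t => |v t| ^ p) volume 0 τ :=
    hvp.mono_set (hsub τ hτmem)
  -- integral inequality
  have hint : (∫ t in (0:ℝ)..τ, |v t| ^ p) ≤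
      (∫ t in (0:ℝ)..τ, |v t|) * M ^ (p - 1) := by
    rw [← intervalIntegral.integral_mul_const]
    apply intervalIntegral.integral_mono_on hτ0.le hIvp (hIv.mul_const _)
    intro t ht
    exact hpw t ht
  -- nonnegativity of integrals
  have hA0 : 0 ≤ ∫ t in (0:ℝ)..τ, |v t| ^ p :=
    intervalIntegral.integral_nonneg hτ0.le
      (fun t _ => Real.rpow_nonneg (abs_nonneg _) _)
  have hB0 : 0 ≤ ∫ t in (0:ℝ)..τ, |v t| :=
    intervalIntegral.integral_nonneg hτ0.le (fun t _ => abs_nonneg _)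
  -- exponent identity
  have hexp : (p - 1) * (1/p) = 1/p' := by
    have hpne : p ≠ 0 := ne_of_gt hp0
    have : (p - 1) * (1/p) = 1 - 1/p := by
      field_simp
    rw [this]; linarith [hpp']
  calc (∫ t in (0:ℝ)..τ, |v t| ^ p) ^ (1/p)
      ≤ ((∫ t in (0:ℝ)..τ, |v t|) * M ^ (p - 1)) ^ (1/p) :=
        Real.rpow_le_rpow hA0 hint (by positivity)
    _ = (∫ t in (0:ℝ)..τ, |v t|) ^ (1/p) * (M ^ (p - 1)) ^ (1/p) :=
        Real.mul_rpow hB0 (Real.rpow_nonneg hM0 _)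
    _ = (∫ t in (0:ℝ)..τ, |v t|) ^ (1/p) * M ^ (1/p') := by
        rw [← Real.rpow_mul hM0, hexp]
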